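/- arXiv:1603.05815 — 3 statements merged into one kernel-verified Lean document; each statement's English description precedes it below -/
import Mathlib

section
/- For integers q ≥ 2 and k ≥ 0, the composite map M_1^{q-2} ∘ M_2 ∘ M_1^{k} maps [0,1] onto the interval [1/q, (k+1)/(qk+q-1)], and consequently μ([1/q, (k+1)/(qk+q-1)]) = 2^{-k-q+1} for Minkowski's question mark measure μ. -/
open MeasureTheory
open scoped ENNReal

/-!
The maps `M₁ x = x / (1 + x)` and `M₂ x = 1 / (2 - x)` are Möbius transformations, so the
composite `M₁^[q-2] ∘ M₂ ∘ M₁^[k]` is the increasing Möbius map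
`x ↦ (1 + k x) / (q + (q k - 1) x)` on `[0,1]`, whose image is the interval between its values
at `0` and `1`. The functional equations of `Q` give `Q (f x) = (Q x / 2^k + 1) / 2^(q-1)` for this
composite `f`, and since the continuous distribution function `Q` makes `μ` atomless, the measure
of the image is `Q (f 1) - Q (f 0) = 2^(-k) / 2^(q-1)`.
-/

open Set Filter Topology

noncomputable def M₁ (x : ℝ) : ℝ := x / (1 + x)

noncomputable def M₂ (x : ℝ) : ℝ := 1 / (2 - x)

lemma M₁_iterate_apply (m : ℕ) {x : ℝ} (hx : 0 ≤ x) : M₁^[m] x = x / (1 + m * x) := by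
  induction m with
  | zero => simp
  | succ n ih =>
    have hpos : 0 < 1 + n * x := by positivity
    rw [Function.iterate_succ_apply', ih, M₁]
    push_cast
    field_simp
    ring

lemma mapsTo_M₁ : MapsTo M₁ (Icc 0 1) (Icc 0 1) := fun x ⟨hx0, _⟩ =>
  ⟨by unfold M₁; positivity, (div_le_one (by positivity)).2 (by linarith)⟩

lemma mapsTo_M₂ : MapsTo M₂ (Icc 0 1) (Icc 0 1) := fun x ⟨_, hx1⟩ =>
  ⟨one_div_nonneg.2 (by linarith), (div_le_one (by linarith)).2 (by linarith)⟩

lemma M₁_iterate_comp_M₂_comp_M₁_iterate_apply {q : ℕ} (hq : 2 ≤ q) (k : ℕ) {x : ℝ}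
    (hx : x ∈ Icc (0 : ℝ) 1) :
    (M₁^[q - 2] ∘ M₂ ∘ M₁^[k]) x = (1 + k * x) / (q + (q * k - 1) * x) := by
  obtain ⟨hx0, hx1⟩ := hx
  have hpos : 0 < 1 + k * x := by positivity
  have hden : 0 < 2 + (2 * k - 1) * x := by nlinarith [mul_nonneg k.cast_nonneg hx0]
  have hsub : 2 - x / (1 + k * x) = (2 + (2 * k - 1) * x) / (1 + k * x) := by
    rw [eq_div_iff hpos.ne', sub_mul, div_mul_cancel₀ _ hpos.ne']
    ring
  have hadd : 1 + (q - 2 : ℝ) * ((1 + k * x) / (2 + (2 * k - 1) * x)) =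
      (q + (q * k - 1) * x) / (2 + (2 * k - 1) * x) := by
    rw [eq_div_iff hden.ne', add_mul, mul_assoc, div_mul_cancel₀ _ hden.ne']
    ring
  rw [Function.comp_apply, Function.comp_apply, M₁_iterate_apply k hx0, M₂, hsub, one_div_div,
    M₁_iterate_apply _ (by positivity), Nat.cast_sub hq, Nat.cast_two, hadd,
    div_div_div_cancel_right₀ hden.ne']

lemma image_Icc_mobius {k q : ℝ} (hk : 0 ≤ k) (hq : 1 < q) :
    (fun x => (1 + k * x) / (q + (q * k - 1) * x)) '' Icc 0 1 =
      Icc (1 / q) ((k + 1) / (q * k + q - 1)) := by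
  have hden : ∀ x ∈ Icc (0 : ℝ) 1, 0 < q + (q * k - 1) * x := fun x ⟨hx0, hx1⟩ => by
    nlinarith [mul_nonneg (mul_nonneg (by linarith : (0 : ℝ) ≤ q) hk) hx0]
  have hcont : ContinuousOn (fun x => (1 + k * x) / (q + (q * k - 1) * x)) (Icc 0 1) :=
    ContinuousOn.div (by fun_prop) (by fun_prop) fun x hx => (hden x hx).ne'
  -- the Möbius map has determinant `k q - (q k - 1) = 1 > 0`
  have hmono : MonotoneOn (fun x => (1 + k * x) / (q + (q * k - 1) * x)) (Icc 0 1) :=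
    fun x hx y hy hxy => (div_le_div_iff₀ (hden x hx) (hden y hy)).2 (by nlinarith)
  rw [hcont.image_Icc_of_monotoneOn zero_le_one hmono]
  congr 1 <;> ring_nf

section QuestionMark

variable {Q : ℝ → ℝ}

lemma apply_M₁_iterate (hQM₁ : ∀ x ∈ Icc (0 : ℝ) 1, Q (M₁ x) = Q x / 2) (m : ℕ) {x : ℝ}
    (hx : x ∈ Icc (0 : ℝ) 1) : Q (M₁^[m] x) = Q x / 2 ^ m := by
  induction m with
  | zero => simp
  | succ n ih =>
    rw [Function.iterate_succ_apply', hQM₁ _ (mapsTo_M₁.iterate n hx), ih, div_div, pow_succ]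

lemma apply_M₁_iterate_comp_M₂_comp_M₁_iterate
    (hQM₁ : ∀ x ∈ Icc (0 : ℝ) 1, Q (M₁ x) = Q x / 2)
    (hQM₂ : ∀ x ∈ Icc (0 : ℝ) 1, Q (M₂ x) = (Q x + 1) / 2) (n k : ℕ) {x : ℝ}
    (hx : x ∈ Icc (0 : ℝ) 1) :
    Q ((M₁^[n] ∘ M₂ ∘ M₁^[k]) x) = (Q x / 2 ^ k + 1) / 2 / 2 ^ n := by
  have hy := mapsTo_M₁.iterate k hx
  rw [Function.comp_apply, Function.comp_apply, apply_M₁_iterate hQM₁ n (mapsTo_M₂ hy),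
    hQM₂ _ hy, apply_M₁_iterate hQM₁ k hx]

variable {μ : Measure ℝ}

lemma measure_Ico_zero_eq_of_continuousOn (hQcont : ContinuousOn Q (Icc 0 1))
    (hdist : ∀ x ∈ Icc (0 : ℝ) 1, μ (Icc 0 x) = ENNReal.ofReal (Q x)) {a : ℝ} (ha : 0 < a)
    (ha1 : a ≤ 1) : μ (Ico 0 a) = ENNReal.ofReal (Q a) := by
  obtain ⟨u, hu_mono, hu_mem, hu_lim⟩ := exists_seq_strictMono_tendsto' ha
  have hu_Icc : ∀ n, u n ∈ Icc (0 : ℝ) 1 := fun n =>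
    ⟨(hu_mem n).1.le, ((hu_mem n).2.trans_le ha1).le⟩
  have hunion : ⋃ n, Icc 0 (u n) = Ico 0 a := by
    ext y
    simp only [mem_iUnion, mem_Icc, mem_Ico]
    refine ⟨fun ⟨n, hy0, hyn⟩ => ⟨hy0, hyn.trans_lt (hu_mem n).2⟩, fun ⟨hy0, hya⟩ => ?_⟩
    obtain ⟨n, hn⟩ := (hu_lim.eventually (lt_mem_nhds hya)).exists
    exact ⟨n, hy0, hn.le⟩
  have hlim_μ : Tendsto (fun n => μ (Icc 0 (u n))) atTop (𝓝 (μ (Ico 0 a))) :=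
    hunion ▸ tendsto_measure_iUnion_atTop fun _ _ hmn =>
      Icc_subset_Icc_right (hu_mono.monotone hmn)
  have hlim_Q : Tendsto (fun n => ENNReal.ofReal (Q (u n))) atTop (𝓝 (ENNReal.ofReal (Q a))) :=
    ENNReal.tendsto_ofReal <| (hQcont a ⟨ha.le, ha1⟩).tendsto.comp <|
      tendsto_nhdsWithin_iff.2 ⟨hu_lim, Eventually.of_forall hu_Icc⟩
  exact tendsto_nhds_unique hlim_μ (hlim_Q.congr fun n => (hdist _ (hu_Icc n)).symm)

lemma measure_Icc_eq_ofReal_sub_ofReal (hQcont : ContinuousOn Q (Icc 0 1))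
    (hdist : ∀ x ∈ Icc (0 : ℝ) 1, μ (Icc 0 x) = ENNReal.ofReal (Q x)) {a b : ℝ} (ha : 0 < a)
    (hab : a ≤ b) (hb : b ≤ 1) : μ (Icc a b) = ENNReal.ofReal (Q b) - ENNReal.ofReal (Q a) := by
  have hIco := measure_Ico_zero_eq_of_continuousOn hQcont hdist ha (hab.trans hb)
  have hdiff : Icc 0 b \ Ico 0 a = Icc a b := by
    ext y
    simp only [Set.mem_sdiff, mem_Icc, mem_Ico, not_and, not_lt]
    exact ⟨fun ⟨⟨hy0, hyb⟩, hya⟩ => ⟨hya hy0, hyb⟩,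
      fun ⟨hay, hyb⟩ => ⟨⟨ha.le.trans hay, hyb⟩, fun _ => hay⟩⟩
  rw [← hdiff, measure_sdiff (Ico_subset_Icc_self.trans (Icc_subset_Icc_right hab))
    measurableSet_Ico.nullMeasurableSet (hIco ▸ ENNReal.ofReal_ne_top),
    hdist b ⟨ha.le.trans hab, hb⟩, hIco]

end QuestionMark

theorem composite_map_image_and_measure_general
    (μ : Measure ℝ)
    (Q : ℝ → ℝ)
    (hQcont : ContinuousOn Q (Set.Icc 0 1))
    (hQ0 : Q 0 = 0) (hQ1 : Q 1 = 1)
    (hQM1 : ∀ x ∈ Set.Icc (0 : ℝ) 1, Q (x / (1 + x)) = Q x / 2)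
    (hQM2 : ∀ x ∈ Set.Icc (0 : ℝ) 1, Q (1 / (2 - x)) = (Q x + 1) / 2)
    (hdist : ∀ x ∈ Set.Icc (0 : ℝ) 1, μ (Set.Icc 0 x) = ENNReal.ofReal (Q x))
    (q k : ℕ) (hq : 2 ≤ q) :
    ((fun x : ℝ => x / (1 + x))^[q - 2] ∘ (fun x : ℝ => 1 / (2 - x)) ∘
        (fun x : ℝ => x / (1 + x))^[k]) '' Set.Icc 0 1 =
      Set.Icc (1 / (q : ℝ)) ((k + 1) / ((q : ℝ) * k + q - 1)) ∧
    μ (Set.Icc (1 / (q : ℝ)) ((k + 1) / ((q : ℝ) * k + q - 1))) =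
      (1 / 2 : ℝ≥0∞) ^ (k + q - 1) := by
  change (M₁^[q - 2] ∘ M₂ ∘ M₁^[k]) '' Icc 0 1 = _ ∧ _
  set f := M₁^[q - 2] ∘ M₂ ∘ M₁^[k]
  have hf : ∀ x ∈ Icc (0 : ℝ) 1, f x = (1 + k * x) / (q + (q * k - 1) * x) :=
    fun x hx => M₁_iterate_comp_M₂_comp_M₁_iterate_apply hq k hx
  have himage := (image_congr hf).trans (image_Icc_mobius k.cast_nonneg (by exact_mod_cast hq))
  refine ⟨himage, ?_⟩
  have hf0 : f 0 = 1 / q := by simpa using hf 0 (by simp)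
  have hf1 : f 1 = (k + 1) / (q * k + q - 1) := by
    rw [hf 1 (by simp)]; ring_nf
  have hmaps : MapsTo f (Icc 0 1) (Icc 0 1) :=
    (mapsTo_M₁.iterate _).comp (mapsTo_M₂.comp (mapsTo_M₁.iterate _))
  have hab : 1 / (q : ℝ) ≤ (k + 1) / (q * k + q - 1) :=
    nonempty_Icc.1 (himage ▸ (nonempty_Icc.2 zero_le_one).image _)
  have hb1 : ((k : ℝ) + 1) / (q * k + q - 1) ≤ 1 :=
    (hmaps.image_subset (himage ▸ right_mem_Icc.2 hab)).2
  rw [measure_Icc_eq_ofReal_sub_ofReal hQcont hdist (by positivity) hab hb1, ← hf0, ← hf1,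
    apply_M₁_iterate_comp_M₂_comp_M₁_iterate hQM1 hQM2 _ _ (by simp),
    apply_M₁_iterate_comp_M₂_comp_M₁_iterate hQM1 hQM2 _ _ (by simp), hQ0, hQ1,
    ← ENNReal.ofReal_sub _ (by positivity)]
  have harith : (1 / 2 ^ k + 1) / 2 / 2 ^ (q - 2) - (0 / 2 ^ k + 1) / 2 / 2 ^ (q - 2) =
      (1 / 2 : ℝ) ^ (k + q - 1) := by
    rw [show k + q - 1 = k + 1 + (q - 2) by omega, pow_add, pow_add]
    simp only [one_div, inv_pow]
    ring
  rw [harith, ENNReal.ofReal_pow (by norm_num), ENNReal.ofReal_div_of_pos (by norm_num),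
    ENNReal.ofReal_one, ENNReal.ofReal_ofNat]

/-- For integers `q ≥ 2` and `k ≥ 0`, the composite map `M₁^{q-2} ∘ M₂ ∘ M₁^{k}`
(where `M₁(x) = x/(1+x)`, `M₂(x) = 1/(2-x)`) maps `[0,1]` onto the interval
`[1/q, (k+1)/(qk+q-1)]`, and consequently Minkowski's question mark measure `μ`
gives this interval measure `2^{-k-q+1}`. -/
theorem composite_map_image_and_measure
    (μ : Measure ℝ) [IsProbabilityMeasure μ] (hμsupp : μ (Set.Icc (0 : ℝ) 1) = 1)
    (Q : ℝ → ℝ)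
    (hQcont : ContinuousOn Q (Set.Icc 0 1)) (hQmono : MonotoneOn Q (Set.Icc 0 1))
    (hQ0 : Q 0 = 0) (hQ1 : Q 1 = 1)
    (hQM1 : ∀ x ∈ Set.Icc (0 : ℝ) 1, Q (x / (1 + x)) = Q x / 2)
    (hQM2 : ∀ x ∈ Set.Icc (0 : ℝ) 1, Q (1 / (2 - x)) = (Q x + 1) / 2)
    (hdist : ∀ x ∈ Set.Icc (0 : ℝ) 1, μ (Set.Icc 0 x) = ENNReal.ofReal (Q x))
    (q k : ℕ) (hq : 2 ≤ q) :
    ((fun x : ℝ => x / (1 + x))^[q - 2] ∘ (fun x : ℝ => 1 / (2 - x)) ∘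
        (fun x : ℝ => x / (1 + x))^[k]) '' Set.Icc 0 1 =
      Set.Icc (1 / (q : ℝ)) ((k + 1) / ((q : ℝ) * k + q - 1)) ∧
    μ (Set.Icc (1 / (q : ℝ)) ((k + 1) / ((q : ℝ) * k + q - 1))) =
      (1 / 2 : ℝ≥0∞) ^ (k + q - 1) :=
  composite_map_image_and_measure_general μ Q hQcont hQ0 hQ1 hQM1 hQM2 hdist q k hq
end

section
/- Let μ be a compactly supported probability measure with infinite support, with orthonormal polynomials p_j and Gaussian data (ζ^j_l, w^j_l). Define σ_j = Σ_{l=1}^j w^j_l p_{j-1}(ζ^j_l)^2 δ_{ζ^j_l}. Then σ_j is a probability measure, and ∫ x dσ_j = b_{j-1} and ∫ x^2 dσ_j = b_{j-1}^2 + a_{j-1}^2, where a_j, b_j are the Jacobi recurrence coefficients of μ. -/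
/-!
The Gauss nodes `ζ l` (the zeros of `p j`) and the Christoffel numbers `w l` give a discrete
inner product `⟨f, g⟩ = ∑ l, w l f(ζ l) g(ζ l)` for which `p 0, …, p (j - 1)` are still
orthonormal: the rows of `V l m = p m (ζ l)` are orthogonal by the Christoffel–Darboux formula
(its right-hand side vanishes at two zeros of `p j`) and are normalised by the choice of `w`,
so `diag w · V · Vᵀ = 1`, hence `Vᵀ · diag w · V = 1`, which is orthonormality of the columns.
At a zero of `p j` the recurrence reads `ζ p_{j-1} = b_{j-1} p_{j-1} + a_{j-1} p_{j-2}`, and the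
moments of `σ_j` are then read off from this orthonormality.
-/

open MeasureTheory Polynomial

open Finset

/-- At `n = 0` the term `p (0 - 1) = p 0` is junk, killed by `a 0 = 0`. -/
structure IsJacobiRecurrence {K : Type*} [CommRing K] (p : ℕ → K[X]) (a b : ℕ → K) : Prop where
  a_zero : a 0 = 0
  X_mul : ∀ n, X * p n = C (a (n + 1)) * p (n + 1) + C (b n) * p n + C (a n) * p (n - 1)

namespace IsJacobiRecurrence

section CommRing

variable {K : Type*} [CommRing K] {p : ℕ → K[X]} {a b : ℕ → K}

theorem of_succ (ha0 : a 0 = 0) (hrec0 : X * p 0 = C (a 1) * p 1 + C (b 0) * p 0)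
    (hrec : ∀ n, X * p (n + 1) =
      C (a (n + 2)) * p (n + 2) + C (b (n + 1)) * p (n + 1) + C (a (n + 1)) * p n) :
    IsJacobiRecurrence p a b where
  a_zero := ha0
  X_mul
    | 0 => by simp [hrec0, ha0]
    | n + 1 => hrec n

theorem mul_eval (h : IsJacobiRecurrence p a b) (n : ℕ) (x : K) :
    x * (p n).eval x =
      a (n + 1) * (p (n + 1)).eval x + b n * (p n).eval x + a n * (p (n - 1)).eval x := by
  simpa using congrArg (eval x) (h.X_mul n)

theorem mul_eval_of_isRoot (h : IsJacobiRecurrence p a b) {n : ℕ} {x : K}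
    (hx : (p (n + 1)).IsRoot x) :
    x * (p n).eval x = b n * (p n).eval x + a n * (p (n - 1)).eval x := by
  rw [h.mul_eval, hx.eq_zero, mul_zero, zero_add]

theorem christoffel_darboux (h : IsJacobiRecurrence p a b) (n : ℕ) (x y : K) :
    (x - y) * ∑ m ∈ range n, (p m).eval x * (p m).eval y =
      a n * ((p n).eval x * (p (n - 1)).eval y - (p (n - 1)).eval x * (p n).eval y) := by
  induction n with
  | zero => simp
  | succ n ih =>
    rw [sum_range_succ, mul_add, ih, Nat.add_sub_cancel]
    linear_combination (p n).eval y * h.mul_eval n x - (p n).eval x * h.mul_eval n y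

end CommRing

variable {K : Type*} [Field K] {p : ℕ → K[X]} {a b : ℕ → K}

theorem sum_weight_mul_eval_mul_eval (h : IsJacobiRecurrence p a b) {j : ℕ} {ζ : Fin j → K}
    (hζ : Function.Injective ζ) (hroot : ∀ l, (p j).IsRoot (ζ l)) {w : Fin j → K}
    (hw : ∀ l, w l * ∑ m ∈ range j, (p m).eval (ζ l) ^ 2 = 1) {m n : ℕ} (hm : m < j)
    (hn : n < j) :
    ∑ l, w l * (p m).eval (ζ l) * (p n).eval (ζ l) = if m = n then 1 else 0 := by
  let V : Matrix (Fin j) (Fin j) K := Matrix.of fun l m => (p m).eval (ζ l)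
  have hrows : Matrix.diagonal w * V * V.transpose = 1 := by
    ext l k
    rw [Matrix.mul_assoc, Matrix.diagonal_mul, Matrix.one_apply]
    simp only [Matrix.mul_apply, Matrix.transpose_apply, V, Matrix.of_apply]
    rw [Fin.sum_univ_eq_sum_range (fun m => (p m).eval (ζ l) * (p m).eval (ζ k))]
    split_ifs with hlk
    · simpa [hlk, sq] using hw k
    · have hCD := h.christoffel_darboux j (ζ l) (ζ k)
      rw [(hroot l).eq_zero, (hroot k).eq_zero, zero_mul, mul_zero, sub_zero, mul_zero] at hCD
      rw [(mul_eq_zero.mp hCD).resolve_left (sub_ne_zero.mpr (hζ.ne hlk)), mul_zero]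
  have hcols := Matrix.ext_iff.mpr (mul_eq_one_comm.mp hrows) ⟨m, hm⟩ ⟨n, hn⟩
  rw [Matrix.mul_apply] at hcols
  simp only [Matrix.diagonal_mul, Matrix.transpose_apply, V, Matrix.of_apply, Matrix.one_apply,
    Fin.mk.injEq] at hcols
  rw [← hcols]
  exact sum_congr rfl fun l _ => by ring

theorem sum_weight_moments (h : IsJacobiRecurrence p a b) {n : ℕ} {ζ : Fin (n + 1) → K}
    (hζ : Function.Injective ζ) (hroot : ∀ l, (p (n + 1)).IsRoot (ζ l)) {w : Fin (n + 1) → K}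
    (hw : ∀ l, w l * ∑ m ∈ range (n + 1), (p m).eval (ζ l) ^ 2 = 1) :
    (∑ l, w l * (p n).eval (ζ l) ^ 2 = 1) ∧
      (∑ l, w l * (p n).eval (ζ l) ^ 2 * ζ l = b n) ∧
      (∑ l, w l * (p n).eval (ζ l) ^ 2 * ζ l ^ 2 = b n ^ 2 + a n ^ 2) := by
  have horth {i k : ℕ} (hi : i ≤ n) (hk : k ≤ n) :=
    h.sum_weight_mul_eval_mul_eval hζ hroot hw (Nat.lt_succ_of_le hi) (Nat.lt_succ_of_le hk)
  have hnn := horth le_rfl le_rfl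
  have hpp := horth (Nat.sub_le n 1) (Nat.sub_le n 1)
  have hnp : a n * ∑ l, w l * (p n).eval (ζ l) * (p (n - 1)).eval (ζ l) = 0 := by
    rcases n with _ | n
    · -- here `p (n - 1) = p n`, so it is `a 0 = 0` rather than orthogonality that kills the term
      rw [h.a_zero, zero_mul]
    · rw [horth le_rfl (Nat.sub_le _ 1), if_neg (by omega), mul_zero]
  rw [if_pos rfl] at hnn hpp
  have hζn (l : Fin (n + 1)) := h.mul_eval_of_isRoot (hroot l)
  refine ⟨?_, ?_, ?_⟩
  · simpa only [mul_assoc, sq] using hnn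
  · calc ∑ l, w l * (p n).eval (ζ l) ^ 2 * ζ l
        = b n * ∑ l, w l * (p n).eval (ζ l) * (p n).eval (ζ l)
          + a n * ∑ l, w l * (p n).eval (ζ l) * (p (n - 1)).eval (ζ l) := by
          simp only [mul_sum, ← sum_add_distrib]
          exact sum_congr rfl fun l _ => by linear_combination w l * (p n).eval (ζ l) * hζn l
      _ = b n := by rw [hnn, hnp, mul_one, add_zero]
  · calc ∑ l, w l * (p n).eval (ζ l) ^ 2 * ζ l ^ 2
        = b n ^ 2 * ∑ l, w l * (p n).eval (ζ l) * (p n).eval (ζ l)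
          + 2 * b n * (a n * ∑ l, w l * (p n).eval (ζ l) * (p (n - 1)).eval (ζ l))
          + a n ^ 2 * ∑ l, w l * (p (n - 1)).eval (ζ l) * (p (n - 1)).eval (ζ l) := by
          simp only [mul_sum, ← sum_add_distrib]
          refine sum_congr rfl fun l _ => ?_
          linear_combination w l * (ζ l * (p n).eval (ζ l) + b n * (p n).eval (ζ l)
            + a n * (p (n - 1)).eval (ζ l)) * hζn l
      _ = b n ^ 2 + a n ^ 2 := by rw [hnn, hnp, hpp]; ring

end IsJacobiRecurrence

theorem sigma_j_probability_and_moments_general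
    (p : ℕ → ℝ[X]) (a b : ℕ → ℝ)
    (hp0 : p 0 = 1)
    (ha0 : a 0 = 0)
    (hrec0 : X * p 0 = C (a 1) * p 1 + C (b 0) * p 0)
    (hrec : ∀ n, X * p (n + 1) =
      C (a (n + 2)) * p (n + 2) + C (b (n + 1)) * p (n + 1) + C (a (n + 1)) * p n)
    (j : ℕ) (hj : 1 ≤ j)
    (ζ : Fin j → ℝ) (hζmono : StrictMono ζ)
    (hζroot : ∀ l, (p j).eval (ζ l) = 0)
    (w : Fin j → ℝ)
    (hw : ∀ l, w l = (∑ m ∈ Finset.range j, ((p m).eval (ζ l)) ^ 2)⁻¹) :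
    (∑ l, w l * ((p (j - 1)).eval (ζ l)) ^ 2 = 1) ∧
    (∑ l, w l * ((p (j - 1)).eval (ζ l)) ^ 2 * ζ l = b (j - 1)) ∧
    (∑ l, w l * ((p (j - 1)).eval (ζ l)) ^ 2 * (ζ l) ^ 2 =
      b (j - 1) ^ 2 + a (j - 1) ^ 2) := by
  obtain ⟨n, rfl⟩ : ∃ n, j = n + 1 := ⟨j - 1, by omega⟩
  have hweight (l : Fin (n + 1)) : w l * ∑ m ∈ range (n + 1), (p m).eval (ζ l) ^ 2 = 1 := by
    have hpos : 0 < ∑ m ∈ range (n + 1), (p m).eval (ζ l) ^ 2 :=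
      sum_pos' (fun _ _ => sq_nonneg _) ⟨0, by simp, by simp [hp0]⟩
    rw [hw l, inv_mul_cancel₀ hpos.ne']
  simpa only [Nat.add_sub_cancel] using
    (IsJacobiRecurrence.of_succ ha0 hrec0 hrec).sum_weight_moments hζmono.injective hζroot hweight

/-- Let `μ` be a compactly supported probability measure with infinite support,
with orthonormal polynomials `p_j` satisfying the three-term recurrence with
Jacobi coefficients `a, b` (`a_0 = 0`), and Gaussian data `(ζ^j_l, w^j_l)`.
Then `σ_j = ∑_l w^j_l p_{j-1}(ζ^j_l)² δ_{ζ^j_l}` is a probability measure with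
`∫ x dσ_j = b_{j-1}` and `∫ x² dσ_j = b_{j-1}² + a_{j-1}²`. -/
theorem sigma_j_probability_and_moments
    (μ : Measure ℝ) [IsProbabilityMeasure μ]
    (hcomp : ∃ K : Set ℝ, IsCompact K ∧ μ Kᶜ = 0)
    (hinf : ∀ s : Finset ℝ, μ ((s : Set ℝ))ᶜ ≠ 0)
    (p : ℕ → ℝ[X]) (a b : ℕ → ℝ)
    (hp0 : p 0 = 1)
    (hdeg : ∀ n, (p n).natDegree = n)
    (hlead : ∀ n, 0 < (p n).leadingCoeff)
    (horth : ∀ m n, (∫ x, (p m).eval x * (p n).eval x ∂μ) = if m = n then 1 else 0)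
    (ha0 : a 0 = 0) (hapos : ∀ n, 1 ≤ n → 0 < a n)
    (hrec0 : X * p 0 = C (a 1) * p 1 + C (b 0) * p 0)
    (hrec : ∀ n, X * p (n + 1) =
      C (a (n + 2)) * p (n + 2) + C (b (n + 1)) * p (n + 1) + C (a (n + 1)) * p n)
    (j : ℕ) (hj : 1 ≤ j)
    (ζ : Fin j → ℝ) (hζmono : StrictMono ζ)
    (hζroot : ∀ l, (p j).eval (ζ l) = 0)
    (w : Fin j → ℝ)
    (hw : ∀ l, w l = (∑ m ∈ Finset.range j, ((p m).eval (ζ l)) ^ 2)⁻¹) :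
    (∑ l, w l * ((p (j - 1)).eval (ζ l)) ^ 2 = 1) ∧
    (∑ l, w l * ((p (j - 1)).eval (ζ l)) ^ 2 * ζ l = b (j - 1)) ∧
    (∑ l, w l * ((p (j - 1)).eval (ζ l)) ^ 2 * (ζ l) ^ 2 =
      b (j - 1) ^ 2 + a (j - 1) ^ 2) :=
  sigma_j_probability_and_moments_general p a b hp0 ha0 hrec0 hrec j hj ζ hζmono hζroot w hw
end

section
/- Let λ be the discrete measure λ = (1/j) Σ_{l=1}^j δ_{ψ_l} with 0 ≤ ψ_1 ≤ ... ≤ ψ_j ≤ 1, and let η be Lebesgue measure on [0,1]. Then the discrepancy D(λ,η) = sup{ |λ(I) - η(I)| : I = (a,b) ⊂ [0,1] } equals the maximum over l = 1,...,j and i ∈ {0,1} of the quantities |ψ_l - (l-i)/j|, |1 - ψ_l - (j-l+i)/j|, and over l,k and i ∈ {-1,1} of |ψ_l - ψ_k - (l-k+i)/j|. -/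
/-!
Pad the points by `ψ 0 = 0` and `ψ (j + 1) = 1`. If `k` points lie in `[0, a]` and `n` points in
`[0, b)`, then `(a, b)` holds exactly `n - k` points, sits inside the gap `(ψ k, ψ (n + 1))` and
contains the cluster `[ψ (k + 1), ψ n]`; so its discrepancy is at most the excess length
`ψ l - ψ k - (l - k - 1) / j` of some gap or the excess mass `(l - k + 1) / j - (ψ l - ψ k)` of
some cluster. Conversely each gap is an admissible interval and each cluster a limit of admissible
intervals, so the discrepancy is the least bound for these finitely many numbers. The candidate
values are exactly these numbers, their negatives, and quantities dominated by them, so their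
supremum is that least bound as well.
-/

open scoped Classical

theorem Nat.exists_le_and_not_succ {P : ℕ → Prop} (h0 : P 0) :
    ∀ {n : ℕ}, ¬P (n + 1) → ∃ k ≤ n, P k ∧ ¬P (k + 1)
  | 0, h => ⟨0, le_rfl, h0, h⟩
  | n + 1, h => by
    by_cases hn : P (n + 1)
    · exact ⟨n + 1, le_rfl, hn, h⟩
    · obtain ⟨k, hk, hPk, hPk'⟩ := Nat.exists_le_and_not_succ h0 hn
      exact ⟨k, hk.trans n.le_succ, hPk, hPk'⟩

namespace DiscrepancyFormula

variable (j : ℕ) (ψ : ℕ → ℝ)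

/-- `ψ` padded by `ψ 0 = 0` and `ψ l = 1` for `l > j`: the boundary intervals `(0, ψ l)` and
`(ψ l, 1)` then become intervals between two padded points. -/
noncomputable def extend (l : ℕ) : ℝ :=
  if l = 0 then 0 else if l ≤ j then ψ l else 1

noncomputable def pointCount (a b : ℝ) : ℕ :=
  ((Finset.Icc 1 j).filter fun l => ψ l ∈ Set.Ioo a b).card

def discrepancySet : Set ℝ :=
  {e : ℝ | ∃ a b : ℝ, 0 ≤ a ∧ a ≤ b ∧ b ≤ 1 ∧ e = |(pointCount j ψ a b : ℝ) / j - (b - a)|}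

def candidateSet : Set ℝ :=
  {e : ℝ | ∃ l ∈ Finset.Icc 1 j, ∃ i ∈ ({0, 1} : Set ℤ),
      e = |ψ l - ((l : ℝ) - (i : ℝ)) / j| ∨
      e = |1 - ψ l - ((j : ℝ) - (l : ℝ) + (i : ℝ)) / j|} ∪
    {e : ℝ | ∃ l ∈ Finset.Icc 1 j, ∃ k ∈ Finset.Icc 1 j,
      ∃ i ∈ ({-1, 1} : Set ℤ),
      e = |ψ l - ψ k - ((l : ℝ) - (k : ℝ) + (i : ℝ)) / j|}

/-- The open interval `(ψ k, ψ l)` holds at most `l - k - 1` points and the closed interval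
`[ψ k, ψ l]` at least `l - k + 1`; `gap` and `cluster` are the resulting lower bounds for the
discrepancy. -/
noncomputable def gap (k l : ℕ) : ℝ :=
  extend j ψ l - extend j ψ k - ((l : ℝ) - k - 1) / j

noncomputable def cluster (k l : ℕ) : ℝ :=
  ((l : ℝ) - k + 1) / j - (extend j ψ l - extend j ψ k)

def BoundsGapsAndClusters (X : ℝ) : Prop :=
  (∀ k l, k < l → l ≤ j + 1 → gap j ψ k l ≤ X) ∧
    ∀ k l, 1 ≤ k → k ≤ l → l ≤ j → cluster j ψ k l ≤ X

variable {j ψ}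

@[simp] lemma extend_zero : extend j ψ 0 = 0 := rfl

lemma extend_of_mem {l : ℕ} (hl : l ∈ Finset.Icc 1 j) : extend j ψ l = ψ l := by
  rw [Finset.mem_Icc] at hl
  simp [extend, hl.2, Nat.one_le_iff_ne_zero.mp hl.1]

lemma extend_of_lt {l : ℕ} (hl : j < l) : extend j ψ l = 1 := by
  simp [extend, hl.not_ge, (Nat.zero_le j).trans_lt hl |>.ne']

lemma monotone_extend (hmem : ∀ l ∈ Finset.Icc 1 j, ψ l ∈ Set.Icc (0 : ℝ) 1)
    (hmono : ∀ l k, 1 ≤ l → l ≤ k → k ≤ j → ψ l ≤ ψ k) : Monotone (extend j ψ) := by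
  refine monotone_nat_of_le_succ fun n => ?_
  rcases Nat.eq_zero_or_pos n with rfl | hn0
  · rcases Nat.eq_zero_or_pos j with rfl | hj
    · simp [extend_of_lt]
    · simpa [extend_of_mem (j := j) (l := 1) (by simp; omega)] using (hmem 1 (by simp; omega)).1
  rcases Nat.lt_or_ge j (n + 1) with hn | hn
  · rw [extend_of_lt hn]
    rcases Nat.lt_or_ge j n with hjn | hjn
    · rw [extend_of_lt hjn]
    · rw [extend_of_mem (by simp; omega)]
      exact (hmem n (by simp; omega)).2
  · rw [extend_of_mem (by simp; omega), extend_of_mem (by simp; omega)]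
    exact hmono n (n + 1) hn0 n.le_succ hn

lemma extend_mem_Icc (hext : Monotone (extend j ψ)) (l : ℕ) : extend j ψ l ∈ Set.Icc (0 : ℝ) 1 :=
  ⟨hext l.zero_le, (hext (Nat.le_add_left l (j + 1))).trans (extend_of_lt (by omega)).le⟩

lemma pointCount_add_le (hext : Monotone (extend j ψ)) {k l : ℕ} (hkl : k < l) :
    pointCount j ψ (extend j ψ k) (extend j ψ l) + (k + 1) ≤ l := by
  have hsub : ((Finset.Icc 1 j).filter fun m => ψ m ∈ Set.Ioo (extend j ψ k) (extend j ψ l))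
      ⊆ Finset.Ioo k l := by
    intro m hm
    obtain ⟨hm, hkm, hml⟩ := Finset.mem_filter.mp hm
    rw [← extend_of_mem (ψ := ψ) hm] at hkm hml
    exact Finset.mem_Ioo.mpr ⟨hext.reflect_lt hkm, hext.reflect_lt hml⟩
  have := (Finset.card_le_card hsub).trans_eq (Nat.card_Ioo k l)
  unfold pointCount
  omega

lemma le_pointCount (hext : Monotone (extend j ψ)) {k l : ℕ} (hk : 1 ≤ k) (hl : l ≤ j)
    {a b : ℝ} (ha : a < extend j ψ k) (hb : extend j ψ l < b) :
    l + 1 - k ≤ pointCount j ψ a b := by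
  have hsub : Finset.Icc k l ⊆ (Finset.Icc 1 j).filter fun m => ψ m ∈ Set.Ioo a b := by
    intro m hm
    obtain ⟨hkm, hml⟩ := Finset.mem_Icc.mp hm
    have hm' : m ∈ Finset.Icc 1 j := Finset.mem_Icc.mpr ⟨hk.trans hkm, hml.trans hl⟩
    rw [Finset.mem_filter, ← extend_of_mem (ψ := ψ) hm']
    exact ⟨hm', ha.trans_le (hext hkm), (hext hml).trans_lt hb⟩
  exact (Nat.card_Icc k l).symm.trans_le (Finset.card_le_card hsub)

lemma pointCount_eq (hext : Monotone (extend j ψ)) {k n : ℕ} (hn : n ≤ j) {a b : ℝ}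
    (hka : extend j ψ k ≤ a) (hak : a < extend j ψ (k + 1))
    (hnb : extend j ψ n < b) (hbn : b ≤ extend j ψ (n + 1)) :
    pointCount j ψ a b = n - k := by
  suffices ((Finset.Icc 1 j).filter fun m => ψ m ∈ Set.Ioo a b) = Finset.Ioc k n by
    rw [pointCount, this, Nat.card_Ioc]
  ext m
  simp only [Finset.mem_filter, Finset.mem_Ioc, Set.mem_Ioo]
  constructor
  · rintro ⟨hm, ham, hmb⟩
    rw [← extend_of_mem (ψ := ψ) hm] at ham hmb
    exact ⟨hext.reflect_lt (hka.trans_lt ham),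
      Nat.lt_succ_iff.mp (hext.reflect_lt (hmb.trans_le hbn))⟩
  · rintro ⟨hkm, hmn⟩
    have hm : m ∈ Finset.Icc 1 j := Finset.mem_Icc.mpr ⟨by omega, hmn.trans hn⟩
    rw [← extend_of_mem (ψ := ψ) hm]
    exact ⟨hm, hak.trans_le (hext hkm), (hext hmn).trans_lt hnb⟩

lemma gap_zero_succ (hj : 0 < j) : gap j ψ 0 (j + 1) = 0 := by
  simp [gap, extend_of_lt, hj.ne']

lemma BoundsGapsAndClusters.nonneg (hj : 0 < j) {X : ℝ} (hX : BoundsGapsAndClusters j ψ X) :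
    0 ≤ X :=
  (gap_zero_succ hj).symm.trans_le (hX.1 0 (j + 1) (Nat.succ_pos j) le_rfl)

lemma bddAbove_discrepancySet : BddAbove (discrepancySet j ψ) := by
  refine ⟨1, ?_⟩
  rintro _ ⟨a, b, ha, hab, hb, rfl⟩
  have hcard : pointCount j ψ a b ≤ j :=
    (Finset.card_filter_le _ _).trans (by simp)
  have h0 : 0 ≤ (pointCount j ψ a b : ℝ) / j := by positivity
  have h1 : (pointCount j ψ a b : ℝ) / j ≤ 1 :=
    div_le_one_of_le₀ (by exact_mod_cast hcard) (by positivity)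
  exact abs_sub_le_iff.mpr ⟨by linarith, by linarith⟩

lemma abs_le_sSup_discrepancySet {a b : ℝ} (ha : 0 ≤ a) (hab : a ≤ b) (hb : b ≤ 1) :
    |(pointCount j ψ a b : ℝ) / j - (b - a)| ≤ sSup (discrepancySet j ψ) :=
  le_csSup bddAbove_discrepancySet ⟨a, b, ha, hab, hb, rfl⟩

lemma gap_le_sSup_discrepancySet (hext : Monotone (extend j ψ)) {k l : ℕ} (hkl : k < l) :
    gap j ψ k l ≤ sSup (discrepancySet j ψ) := by
  set c := pointCount j ψ (extend j ψ k) (extend j ψ l)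
  have hc : (c : ℝ) + (k + 1) ≤ l := by exact_mod_cast pointCount_add_le hext hkl
  calc gap j ψ k l ≤ (extend j ψ l - extend j ψ k) - c / j := by
        unfold gap; gcongr; linarith
    _ ≤ |c / j - (extend j ψ l - extend j ψ k)| := by rw [abs_sub_comm]; exact le_abs_self _
    _ ≤ sSup (discrepancySet j ψ) :=
        abs_le_sSup_discrepancySet (extend_mem_Icc hext k).1 (hext hkl.le)
          (extend_mem_Icc hext l).2

lemma cluster_le_sSup_discrepancySet (hj : 0 < j) (hext : Monotone (extend j ψ)) {k l : ℕ}
    (hk : 1 ≤ k) (hkl : k ≤ l) (hl : l ≤ j) : cluster j ψ k l ≤ sSup (discrepancySet j ψ) := by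
  have hjR : (0 : ℝ) < j := by exact_mod_cast hj
  have hkR : (1 : ℝ) ≤ k := by exact_mod_cast hk
  have hlR : (l : ℝ) ≤ j := by exact_mod_cast hl
  -- A cluster touching `0` or `1` cannot be enlarged inside `[0, 1]`; it is then dominated by
  -- the gap on its other side.
  rcases (extend_mem_Icc hext k).1.eq_or_lt with hk0 | hk0
  · refine le_trans ?_ (gap_le_sSup_discrepancySet hext (Nat.lt_succ_of_le hl))
    have : ((l : ℝ) - k + 1) / j ≤ 1 - ((j : ℝ) + 1 - l - 1) / j := by
      rw [div_le_iff₀ hjR, sub_mul, div_mul_cancel₀ _ hjR.ne']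
      linarith
    simp only [cluster, gap, extend_of_lt (Nat.lt_succ_self j), ← hk0]
    push_cast
    linarith
  rcases (extend_mem_Icc hext l).2.eq_or_lt with hl1 | hl1
  · refine le_trans ?_ (gap_le_sSup_discrepancySet hext (k := 0) hk)
    have : ((l : ℝ) - k + 1) / j + ((k : ℝ) - 1) / j ≤ 1 := by
      rw [← add_div, div_le_one hjR]
      linarith
    simp only [cluster, gap, extend_zero, hl1, CharP.cast_eq_zero, sub_zero]
    linarith
  refine le_of_forall_sub_le fun ε hε => ?_
  obtain ⟨δ, hδ, hδε, hδk, hδl⟩ :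
      ∃ δ > 0, δ ≤ ε ∧ δ ≤ extend j ψ k ∧ δ ≤ 1 - extend j ψ l :=
    ⟨_, lt_min hε (lt_min hk0 (sub_pos.mpr hl1)), min_le_left _ _,
      (min_le_right _ _).trans (min_le_left _ _), (min_le_right _ _).trans (min_le_right _ _)⟩
  set a := extend j ψ k - δ / 2 with ha
  set b := extend j ψ l + δ / 2 with hb
  set c := pointCount j ψ a b
  have hc : (l : ℝ) + 1 ≤ c + k := by
    have := le_pointCount hext hk hl (a := a) (b := b) (by rw [ha]; linarith)
      (by rw [hb]; linarith)
    exact_mod_cast (show l + 1 ≤ c + k by omega)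
  calc cluster j ψ k l - ε ≤ c / j - (b - a) := by
        have : ((l : ℝ) - k + 1) / j ≤ c / j := by gcongr; linarith
        simp only [cluster, a, b]
        linarith
    _ ≤ |c / j - (b - a)| := le_abs_self _
    _ ≤ sSup (discrepancySet j ψ) :=
        abs_le_sSup_discrepancySet (by linarith) (by linarith [hext hkl]) (by linarith)

lemma boundsGapsAndClusters_sSup_discrepancySet (hj : 0 < j) (hext : Monotone (extend j ψ)) :
    BoundsGapsAndClusters j ψ (sSup (discrepancySet j ψ)) :=
  ⟨fun _ _ hkl _ => gap_le_sSup_discrepancySet hext hkl,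
    fun _ _ hk hkl hl => cluster_le_sSup_discrepancySet hj hext hk hkl hl⟩

lemma le_of_mem_discrepancySet (hj : 0 < j) (hext : Monotone (extend j ψ)) {X : ℝ}
    (hX : BoundsGapsAndClusters j ψ X) {s : ℝ} (hs : s ∈ discrepancySet j ψ) : s ≤ X := by
  obtain ⟨a, b, ha, hab, hb, rfl⟩ := hs
  rcases hab.eq_or_lt with rfl | hab
  · simpa [pointCount] using hX.nonneg hj
  -- `k` points lie in `[0, a]` and `n` points in `[0, b)`.
  obtain ⟨k, hkj, hka, hak⟩ := Nat.exists_le_and_not_succ (P := fun m => extend j ψ m ≤ a)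
    (by simpa using ha) (n := j) (by rw [extend_of_lt (Nat.lt_succ_self j), not_le]; linarith)
  obtain ⟨n, hnj, hnb, hbn⟩ := Nat.exists_le_and_not_succ (P := fun m => extend j ψ m < b)
    (by simpa using ha.trans_lt hab) (n := j)
    (by rw [extend_of_lt (Nat.lt_succ_self j), not_lt]; exact hb)
  rw [not_le] at hak
  rw [not_lt] at hbn
  have hkn : k ≤ n := Nat.lt_succ_iff.mp (hext.reflect_lt (hka.trans_lt (hab.trans_le hbn)))
  rw [pointCount_eq hext hnj hka hak hnb hbn, Nat.cast_sub hkn, abs_sub_le_iff]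
  constructor
  · rcases hkn.eq_or_lt with rfl | hkn
    · simpa using (sub_nonpos.mpr hab.le).trans (hX.nonneg hj)
    have hcluster : cluster j ψ (k + 1) n
        = ((n : ℝ) - k) / j - (extend j ψ n - extend j ψ (k + 1)) := by
      simp only [cluster]; push_cast; ring
    linarith [hX.2 (k + 1) n (by omega) hkn hnj]
  · have hgap : gap j ψ k (n + 1) = extend j ψ (n + 1) - extend j ψ k - ((n : ℝ) - k) / j := by
      simp only [gap]; push_cast; ring
    linarith [hX.1 k (n + 1) (by omega) (by omega)]

lemma abs_sub_div_le (hj : 0 < j) {X : ℝ} (hX : BoundsGapsAndClusters j ψ X) {l : ℕ}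
    (hl : l ∈ Finset.Icc 1 j) {i : ℝ} (hi0 : 0 ≤ i) (hi1 : i ≤ 1) :
    |ψ l - ((l : ℝ) - i) / j| ≤ X := by
  have hjR : (0 : ℝ) < j := by exact_mod_cast hj
  have hleft := hX.1 0 l (Finset.mem_Icc.mp hl).1 (by linarith [(Finset.mem_Icc.mp hl).2])
  have hright := hX.1 l (j + 1) (Nat.lt_succ_of_le (Finset.mem_Icc.mp hl).2) le_rfl
  have hjl : 1 - ((j : ℝ) + 1 - l - 1) / j = l / j := by field_simp; ring
  simp only [gap, extend_zero, extend_of_mem hl, extend_of_lt (Nat.lt_succ_self j),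
    CharP.cast_eq_zero, sub_zero] at hleft hright
  push_cast at hleft hright
  have : ((l : ℝ) - 1) / j ≤ (l - i) / j ∧ ((l : ℝ) - i) / j ≤ l / j :=
    ⟨by gcongr, by gcongr; linarith⟩
  rw [abs_le']
  constructor <;> linarith

lemma abs_sub_sub_div_le {X : ℝ} (hX : BoundsGapsAndClusters j ψ X) {k l : ℕ} (hk : 1 ≤ k)
    (hkl : k ≤ l) (hl : l ≤ j) {i : ℝ} (hi : |i| ≤ 1) :
    |ψ l - ψ k - ((l : ℝ) - k + i) / j| ≤ X := by
  have hcluster := hX.2 k l hk hkl hl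
  rcases hkl.eq_or_lt with rfl | hkl
  · rw [show ψ k - ψ k - ((k : ℝ) - k + i) / j = -(i / j) by ring, abs_neg, abs_div,
      Nat.abs_cast]
    refine le_trans ?_ hcluster
    simp only [cluster, sub_self, zero_add, sub_zero]
    gcongr
  have hgap := hX.1 k l hkl (by omega)
  rw [gap, extend_of_mem (Finset.mem_Icc.mpr ⟨hk, hkl.le.trans hl⟩),
    extend_of_mem (Finset.mem_Icc.mpr ⟨hk.trans hkl.le, hl⟩)] at hgap
  rw [cluster, extend_of_mem (Finset.mem_Icc.mpr ⟨hk, hkl.le.trans hl⟩),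
    extend_of_mem (Finset.mem_Icc.mpr ⟨hk.trans hkl.le, hl⟩)] at hcluster
  obtain ⟨hi0, hi1⟩ := abs_le.mp hi
  have : ((l : ℝ) - k - 1) / j ≤ (l - k + i) / j ∧ ((l : ℝ) - k + i) / j ≤ (l - k + 1) / j :=
    ⟨by gcongr; linarith, by gcongr⟩
  rw [abs_le']
  constructor <;> linarith

lemma le_of_mem_candidateSet (hj : 0 < j) {X : ℝ} (hX : BoundsGapsAndClusters j ψ X) {t : ℝ}
    (ht : t ∈ candidateSet j ψ) : t ≤ X := by
  rcases ht with ⟨l, hl, i, hi, rfl | rfl⟩ | ⟨l, hl, k, hk, i, hi, rfl⟩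
  · rcases hi with rfl | rfl <;> exact abs_sub_div_le hj hX hl (by norm_num) (by norm_num)
  · have hjR : (j : ℝ) ≠ 0 := by exact_mod_cast hj.ne'
    rw [show 1 - ψ l - ((j : ℝ) - l + i) / j = -(ψ l - ((l : ℝ) - i) / j) by field_simp; ring,
      abs_neg]
    rcases hi with rfl | rfl <;> exact abs_sub_div_le hj hX hl (by norm_num) (by norm_num)
  · have hi : |(i : ℝ)| ≤ 1 := by rcases hi with rfl | rfl <;> norm_num
    rcases le_total k l with hkl | hlk
    · exact abs_sub_sub_div_le hX (Finset.mem_Icc.mp hk).1 hkl (Finset.mem_Icc.mp hl).2 hi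
    · rw [show ψ l - ψ k - ((l : ℝ) - k + i) / j = -(ψ k - ψ l - ((k : ℝ) - l + -i) / j) by ring,
        abs_neg]
      exact abs_sub_sub_div_le hX (Finset.mem_Icc.mp hl).1 hlk (Finset.mem_Icc.mp hk).2
        (by rwa [abs_neg])

lemma boundsGapsAndClusters_sSup_candidateSet (hj : 0 < j) (hT : BddAbove (candidateSet j ψ)) :
    BoundsGapsAndClusters j ψ (sSup (candidateSet j ψ)) := by
  have hboundary : ∀ l ∈ Finset.Icc 1 j, ∀ i ∈ ({0, 1} : Set ℤ),
      |ψ l - ((l : ℝ) - i) / j| ≤ sSup (candidateSet j ψ) ∧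
        |1 - ψ l - ((j : ℝ) - l + i) / j| ≤ sSup (candidateSet j ψ) := fun l hl i hi =>
    ⟨le_csSup hT (Or.inl ⟨l, hl, i, hi, Or.inl rfl⟩),
      le_csSup hT (Or.inl ⟨l, hl, i, hi, Or.inr rfl⟩)⟩
  have hinner : ∀ l ∈ Finset.Icc 1 j, ∀ k ∈ Finset.Icc 1 j, ∀ i ∈ ({-1, 1} : Set ℤ),
      |ψ l - ψ k - ((l : ℝ) - k + i) / j| ≤ sSup (candidateSet j ψ) := fun l hl k hk i hi =>
    le_csSup hT (Or.inr ⟨l, hl, k, hk, i, hi, rfl⟩)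
  refine ⟨fun k l hkl hl => ?_, fun k l hk hkl hl => ?_⟩
  · rcases Nat.eq_zero_or_pos k with rfl | hk
    · rcases hl.eq_or_lt with rfl | hl
      · rw [gap_zero_succ hj]
        exact Real.sSup_nonneg (by
          rintro _ (⟨_, _, _, _, rfl | rfl⟩ | ⟨_, _, _, _, _, _, rfl⟩) <;> exact abs_nonneg _)
      have hl' : l ∈ Finset.Icc 1 j := Finset.mem_Icc.mpr ⟨hkl, Nat.lt_succ_iff.mp hl⟩
      refine le_trans (le_of_eq ?_) ((le_abs_self _).trans (hboundary l hl' 1 (by simp)).1)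
      rw [gap, extend_zero, extend_of_mem hl']
      push_cast
      ring
    have hk' : k ∈ Finset.Icc 1 j := Finset.mem_Icc.mpr ⟨hk, by omega⟩
    rcases hl.eq_or_lt with rfl | hl
    · refine le_trans (le_of_eq ?_) ((le_abs_self _).trans (hboundary k hk' 0 (by simp)).2)
      rw [gap, extend_of_mem hk', extend_of_lt (Nat.lt_succ_self j)]
      push_cast
      ring
    have hl' : l ∈ Finset.Icc 1 j := Finset.mem_Icc.mpr ⟨by omega, Nat.lt_succ_iff.mp hl⟩
    refine le_trans (le_of_eq ?_) ((le_abs_self _).trans (hinner l hl' k hk' (-1) (by simp)))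
    rw [gap, extend_of_mem hk', extend_of_mem hl']
    push_cast
    ring
  · have hk' : k ∈ Finset.Icc 1 j := Finset.mem_Icc.mpr ⟨hk, hkl.trans hl⟩
    have hl' : l ∈ Finset.Icc 1 j := Finset.mem_Icc.mpr ⟨hk.trans hkl, hl⟩
    refine le_trans (le_of_eq ?_) ((neg_le_abs _).trans (hinner l hl' k hk' 1 (by simp)))
    rw [cluster, extend_of_mem hk', extend_of_mem hl']
    push_cast
    ring

end DiscrepancyFormula

open DiscrepancyFormula in
/-- Discrepancy formula (Lemma 6.1): for the uniform atomic measure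
`λ = (1/j) ∑_l δ_{ψ_l}` on ordered points `0 ≤ ψ_1 ≤ ⋯ ≤ ψ_j ≤ 1` and `η`
Lebesgue measure on `[0,1]`, the discrepancy
`D(λ,η) = sup{|λ(I) - η(I)| : I = (a,b) ⊂ [0,1]}` equals the maximum over
`l = 1,…,j` and `i ∈ {0,1}` of `|ψ_l - (l-i)/j|` and `|1 - ψ_l - (j-l+i)/j|`,
and over `l,k` and `i ∈ {-1,1}` of `|ψ_l - ψ_k - (l-k+i)/j|`. -/
theorem discrepancy_finite_formula
    (j : ℕ) (hj : 1 ≤ j) (ψ : ℕ → ℝ)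
    (hmem : ∀ l ∈ Finset.Icc 1 j, ψ l ∈ Set.Icc (0 : ℝ) 1)
    (hmono : ∀ l k, 1 ≤ l → l ≤ k → k ≤ j → ψ l ≤ ψ k) :
    sSup {e : ℝ | ∃ a b : ℝ, 0 ≤ a ∧ a ≤ b ∧ b ≤ 1 ∧
        e = |(((Finset.Icc 1 j).filter fun l => ψ l ∈ Set.Ioo a b).card : ℝ) / j
              - (b - a)|} =
    sSup ({e : ℝ | ∃ l ∈ Finset.Icc 1 j, ∃ i ∈ ({0, 1} : Set ℤ),
            e = |ψ l - ((l : ℝ) - (i : ℝ)) / j| ∨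
            e = |1 - ψ l - ((j : ℝ) - (l : ℝ) + (i : ℝ)) / j|} ∪
          {e : ℝ | ∃ l ∈ Finset.Icc 1 j, ∃ k ∈ Finset.Icc 1 j,
            ∃ i ∈ ({-1, 1} : Set ℤ),
            e = |ψ l - ψ k - ((l : ℝ) - (k : ℝ) + (i : ℝ)) / j|}) := by
  change sSup (discrepancySet j ψ) = sSup (candidateSet j ψ)
  have hext := monotone_extend hmem hmono
  have hD := boundsGapsAndClusters_sSup_discrepancySet hj hext
  have hT : BddAbove (candidateSet j ψ) := ⟨_, fun _ => le_of_mem_candidateSet hj hD⟩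
  have hM := boundsGapsAndClusters_sSup_candidateSet hj hT
  exact le_antisymm
    (Real.sSup_le (fun _ => le_of_mem_discrepancySet hj hext hM) (hM.nonneg hj))
    (Real.sSup_le (fun _ => le_of_mem_candidateSet hj hD) (hD.nonneg hj))
end
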